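/- arXiv:2009.05820 — 6 statements merged into one kernel-verified Lean document; each statement's English description precedes it below -/
import Mathlib

section
/- Let m_d(n) denote the largest real number such that every n-point set in [0,1]^d admits an empty open axis-parallel box of volume at least m_d(n). Then for all positive integers b, d, n, one has (n+1)·m_d(n) ≥ (b+1)·m_d(b) − o(1) as n → ∞ with b, d fixed; consequently the limit c_d = lim_{n→∞} n·m_d(n) exists. -/
open Finset

/-- The dispersion of a finite point set `P` in `[0,1]^d`: the supremum of volumes of
open axis-parallel boxes in `[0,1]^d` disjoint from `P`. -/
noncomputable def dispersion (d : ℕ) (P : Finset (Fin d → ℝ)) : ℝ :=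
  sSup {v : ℝ | ∃ a b : Fin d → ℝ,
    (∀ i, 0 ≤ a i ∧ a i < b i ∧ b i ≤ 1) ∧
    (∀ p ∈ P, ∃ i, p i ∉ Set.Ioo (a i) (b i)) ∧
    v = ∏ i, (b i - a i)}

/-- `mdn d n` : the minimal dispersion over `n`-point subsets of `[0,1]^d`. -/
noncomputable def mdn (d n : ℕ) : ℝ :=
  sInf {v : ℝ | ∃ P : Finset (Fin d → ℝ), P.card = n ∧
    (∀ p ∈ P, ∀ i, p i ∈ Set.Icc (0:ℝ) 1) ∧ v = dispersion d P}

/-!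
Split an `n`-point set into `⌊n / (b + 1)⌋ + 1` parallel slabs. One of them holds at most `b`
points, and stretching it onto the whole cube multiplies the volumes of empty boxes by
`⌊n / (b + 1)⌋ + 1`; hence `m_d(b) ≤ (⌊n / (b + 1)⌋ + 1) m_d(n)`, i.e.
`(b + 1) m_d(b) ≤ (n + 1 + b) m_d(n)`. Together with `m_d(n) = O(1 / n)`, witnessed by
Niederreiter's `(0, m, d)`-nets in a prime base `p ≥ d`, this makes `(n + 1) m_d(n)` converge to
its supremum, and `n m_d(n)` with it.
-/

namespace Polynomial

variable {F ι : Type*} [Field F] [Fintype ι] {α : ι → F}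

/-- Such a polynomial is divisible by `∏ i, (X - C (α i)) ^ k i`. -/
lemma eq_zero_of_taylor_coeff_eq_zero (hα : Function.Injective α) {k : ι → ℕ} {f : F[X]}
    (hf : f.degree < ↑(∑ i, k i)) (h : ∀ i, ∀ j < k i, (taylor (α i) f).coeff j = 0) : f = 0 := by
  classical
  have hdvd : ∏ i, (X - C (α i)) ^ k i ∣ f :=
    Finset.prod_dvd_of_coprime
      (fun i _ j _ hij => ((pairwise_coprime_X_sub_C hα) hij).pow)
      (fun i _ => X_sub_C_pow_dvd_iff.2 (taylor_apply (α i) f ▸ X_pow_dvd_iff.2 (h i)))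
  refine eq_zero_of_dvd_of_degree_lt hdvd (hf.trans_eq ?_)
  rw [degree_prod_of_monic _ _ fun i _ => (monic_X_sub_C _).pow _]
  simp [degree_pow, degree_X_sub_C]

/-- Hermite interpolation over a finite field, by counting: the map to the Taylor coefficients is
injective between sets of the same size. -/
lemma exists_taylor_coeff_eq [Fintype F] (hα : Function.Injective α) (k : ι → ℕ)
    (t : ∀ i, Fin (k i) → F) :
    ∃ f ∈ degreeLT F (∑ i, k i), ∀ i (j : Fin (k i)), (taylor (α i) f).coeff j = t i j := by
  classical
  let T : (Fin (∑ i, k i) → F) →ₗ[F] ∀ i, Fin (k i) → F :=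
    (LinearMap.pi fun i => LinearMap.pi fun j => lcoeff F j ∘ₗ taylor (α i)) ∘ₗ
      (degreeLT F _).subtype ∘ₗ (degreeLTEquiv F _).symm.toLinearMap
  have hT : Function.Injective T := by
    refine (injective_iff_map_eq_zero T).2 fun v hv => ?_
    have hzero := eq_zero_of_taylor_coeff_eq_zero hα
      (mem_degreeLT.1 ((degreeLTEquiv F _).symm v).2)
      (fun i j hj => congrFun (congrFun hv i) ⟨j, hj⟩)
    simpa using congrArg (degreeLTEquiv F _) (Subtype.ext hzero : (degreeLTEquiv F _).symm v = 0)
  obtain ⟨v, hv⟩ := ((Fintype.bijective_iff_injective_and_card T).2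
    ⟨hT, by simp [Fintype.card_pi, Finset.prod_pow_eq_pow_sum]⟩).2 t
  exact ⟨_, ((degreeLTEquiv F _).symm v).2, fun i j => congrFun (congrFun hv i) j⟩

end Polynomial

open Filter Topology

lemma tendsto_ciSup_of_forall_eventually_sub_le {ι : Type*} [Nonempty ι] {l : Filter ι}
    {u : ι → ℝ} (hu : BddAbove (Set.range u)) (h : ∀ b, ∀ ε > 0, ∀ᶠ n in l, u b - ε ≤ u n) :
    Tendsto u l (𝓝 (⨆ n, u n)) := by
  refine tendsto_order.2
    ⟨fun a ha => ?_, fun a ha => .of_forall fun n => (le_ciSup hu n).trans_lt ha⟩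
  obtain ⟨b, hb⟩ := exists_lt_of_lt_ciSup ha
  filter_upwards [h b ((u b - a) / 2) (by linarith)] with n hn
  linarith

namespace Dispersion

variable {d : ℕ}

def IsEmptyBox (P : Finset (Fin d → ℝ)) (a b : Fin d → ℝ) : Prop :=
  (∀ i, 0 ≤ a i ∧ a i < b i ∧ b i ≤ 1) ∧ ∀ p ∈ P, ∃ i, p i ∉ Set.Ioo (a i) (b i)

lemma IsEmptyBox.anti {P Q : Finset (Fin d → ℝ)} {a b : Fin d → ℝ} (h : IsEmptyBox Q a b)
    (hPQ : P ⊆ Q) : IsEmptyBox P a b :=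
  ⟨h.1, fun p hp => h.2 p (hPQ hp)⟩

lemma IsEmptyBox.prod_le_one {P : Finset (Fin d → ℝ)} {a b : Fin d → ℝ} (h : IsEmptyBox P a b) :
    ∏ i, (b i - a i) ≤ 1 :=
  Finset.prod_le_one (fun i _ => by linarith [h.1 i]) (fun i _ => by linarith [h.1 i])

lemma le_dispersion {P : Finset (Fin d → ℝ)} {a b : Fin d → ℝ} (h : IsEmptyBox P a b) :
    ∏ i, (b i - a i) ≤ dispersion d P :=
  le_csSup ⟨1, by rintro _ ⟨a, b, hab, hP, rfl⟩; exact IsEmptyBox.prod_le_one ⟨hab, hP⟩⟩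
    ⟨a, b, h.1, h.2, rfl⟩

lemma dispersion_le {P : Finset (Fin d → ℝ)} {c : ℝ} (hc : 0 ≤ c)
    (h : ∀ a b, IsEmptyBox P a b → ∏ i, (b i - a i) ≤ c) : dispersion d P ≤ c :=
  Real.sSup_le (by rintro _ ⟨a, b, hab, hP, rfl⟩; exact h a b ⟨hab, hP⟩) hc

lemma dispersion_nonneg (P : Finset (Fin d → ℝ)) : 0 ≤ dispersion d P :=
  Real.sSup_nonneg (by
    rintro _ ⟨a, b, hab, -, rfl⟩
    exact Finset.prod_nonneg fun i _ => by linarith [hab i])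

lemma dispersion_le_one (P : Finset (Fin d → ℝ)) : dispersion d P ≤ 1 :=
  dispersion_le zero_le_one fun _ _ h => h.prod_le_one

lemma dispersion_anti {P Q : Finset (Fin d → ℝ)} (hPQ : P ⊆ Q) :
    dispersion d Q ≤ dispersion d P :=
  dispersion_le (dispersion_nonneg P) fun _ _ h => le_dispersion (h.anti hPQ)

def unitCube (d : ℕ) : Set (Fin d → ℝ) := {x | ∀ i, x i ∈ Set.Icc (0 : ℝ) 1}

lemma unitCube_infinite (hd : 1 ≤ d) : (unitCube d).Infinite := by
  have hdiag : Set.InjOn (fun t : ℝ => fun _ : Fin d => t) (Set.Icc 0 1) :=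
    fun _ _ _ _ h => congrFun h ⟨0, hd⟩
  exact ((Set.Icc_infinite zero_lt_one).image hdiag).mono (by rintro _ ⟨t, ht, rfl⟩ _; exact ht)

lemma mdn_nonneg (d n : ℕ) : 0 ≤ mdn d n :=
  Real.sInf_nonneg (by rintro _ ⟨P, -, -, rfl⟩; exact dispersion_nonneg P)

lemma mdn_le_dispersion {n : ℕ} {P : Finset (Fin d → ℝ)} (hP : ↑P ⊆ unitCube d)
    (hcard : P.card = n) : mdn d n ≤ dispersion d P :=
  csInf_le ⟨0, by rintro _ ⟨Q, -, -, rfl⟩; exact dispersion_nonneg Q⟩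
    ⟨P, hcard, fun _ hp => hP hp, rfl⟩

/-- Padding a point set by further points of the cube can only decrease its dispersion. -/
lemma mdn_le_dispersion_of_card_le (hd : 1 ≤ d) {n : ℕ} {P : Finset (Fin d → ℝ)}
    (hP : ↑P ⊆ unitCube d) (hcard : P.card ≤ n) : mdn d n ≤ dispersion d P := by
  classical
  obtain ⟨T, hT, hTcard⟩ :=
    ((unitCube_infinite hd).sdiff P.finite_toSet).exists_subset_card_eq (n - P.card)
  have hdisj : Disjoint P T := Finset.disjoint_right.2 fun _ hx => (hT hx).2
  calc mdn d n ≤ dispersion d (P ∪ T) :=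
        mdn_le_dispersion (by simpa using ⟨hP, fun _ hx => (hT hx).1⟩)
          (by rw [Finset.card_union_of_disjoint hdisj, hTcard]; omega)
    _ ≤ dispersion d P := dispersion_anti Finset.subset_union_left

lemma le_mdn (hd : 1 ≤ d) {n : ℕ} {c : ℝ}
    (h : ∀ P : Finset (Fin d → ℝ), ↑P ⊆ unitCube d → P.card = n → c ≤ dispersion d P) :
    c ≤ mdn d n := by
  obtain ⟨T, hT, hTcard⟩ := (unitCube_infinite hd).exists_subset_card_eq n
  exact le_csInf ⟨_, T, hTcard, fun _ hp => hT hp, rfl⟩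
    (by rintro _ ⟨P, hcard, hP, rfl⟩; exact h P (fun _ hp => hP _ hp) hcard)

lemma mdn_le_one (hd : 1 ≤ d) (n : ℕ) : mdn d n ≤ 1 := by
  obtain ⟨T, hT, hTcard⟩ := (unitCube_infinite hd).exists_subset_card_eq n
  exact (mdn_le_dispersion hT hTcard).trans (dispersion_le_one T)

noncomputable def stretch (i : Fin d) (c w : ℝ) (x : Fin d → ℝ) : Fin d → ℝ :=
  Function.update x i ((x i - c) / w)

lemma stretch_mem_unitCube {i : Fin d} {c w : ℝ} {x : Fin d → ℝ} (hw : 0 < w)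
    (hx : x ∈ unitCube d) (hxi : x i ∈ Set.Ioo c (c + w)) : stretch i c w x ∈ unitCube d := by
  intro k
  rcases eq_or_ne k i with rfl | hk
  · rw [stretch, Function.update_self, Set.mem_Icc, div_le_one hw]
    exact ⟨div_nonneg (by linarith [hxi.1]) hw.le, by linarith [hxi.2]⟩
  · rw [stretch, Function.update_of_ne hk]
    exact hx k

lemma prod_update_affine_sub {ι : Type*} [Fintype ι] [DecidableEq ι] (a b : ι → ℝ) (i : ι)
    (c w : ℝ) :
    ∏ k, (Function.update b i (c + w * b i) k - Function.update a i (c + w * a i) k) =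
      w * ∏ k, (b k - a k) := by
  have hsub : Function.update b i (c + w * b i) - Function.update a i (c + w * a i) =
      Function.update (b - a) i (w * (b i - a i)) := by
    rw [show w * (b i - a i) = c + w * b i - (c + w * a i) by ring, Function.update_sub]
  simp only [← Pi.sub_apply, hsub]
  rw [Finset.prod_update_of_mem (Finset.mem_univ i),
    ← Finset.mul_prod_erase _ _ (Finset.mem_univ i), Finset.sdiff_singleton_eq_erase]
  simp only [Pi.sub_apply]
  ring

lemma IsEmptyBox.of_stretch {P : Finset (Fin d → ℝ)} {i : Fin d} {c w : ℝ} {a b : Fin d → ℝ}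
    (hc : 0 ≤ c) (hw : 0 < w) (hcw : c + w ≤ 1)
    (hab : IsEmptyBox ((P.filter fun x => x i ∈ Set.Ioo c (c + w)).image (stretch i c w)) a b) :
    IsEmptyBox P (Function.update a i (c + w * a i)) (Function.update b i (c + w * b i)) := by
  refine ⟨fun k => ?_, fun x hx => ?_⟩
  · rcases eq_or_ne k i with rfl | hk
    · simp only [Function.update_self]
      obtain ⟨h0, hlt, h1⟩ := hab.1 k
      exact ⟨by positivity, by gcongr, by nlinarith⟩
    · simpa only [Function.update_of_ne hk] using hab.1 k
  by_cases hxi : x i ∈ Set.Ioo c (c + w)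
  · obtain ⟨k, hk⟩ := hab.2 _ (Finset.mem_image_of_mem _ (Finset.mem_filter.2 ⟨hx, hxi⟩))
    refine ⟨k, fun hxk => hk ?_⟩
    rcases eq_or_ne k i with rfl | hki
    · simp only [Function.update_self, Set.mem_Ioo] at hxk
      rw [stretch, Function.update_self, Set.mem_Ioo, lt_div_iff₀ hw, div_lt_iff₀ hw]
      constructor <;> linarith [hxk.1, hxk.2]
    · simpa only [stretch, Function.update_of_ne hki] using hxk
  · refine ⟨i, fun hxi' => hxi ?_⟩
    simp only [Function.update_self, Set.mem_Ioo] at hxi'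
    obtain ⟨h0, -, h1⟩ := hab.1 i
    constructor <;> nlinarith [hxi'.1, hxi'.2]

lemma mul_dispersion_stretch_le (P : Finset (Fin d → ℝ)) (i : Fin d) {c w : ℝ} (hc : 0 ≤ c)
    (hw : 0 < w) (hcw : c + w ≤ 1) :
    w * dispersion d ((P.filter fun x => x i ∈ Set.Ioo c (c + w)).image (stretch i c w)) ≤
      dispersion d P := by
  classical
  rw [← le_div_iff₀' hw]
  refine dispersion_le (div_nonneg (dispersion_nonneg P) hw.le) fun a b hab => ?_
  rw [le_div_iff₀' hw, ← prod_update_affine_sub]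
  exact le_dispersion (hab.of_stretch hc hw hcw)

lemma exists_slab_card_le (P : Finset (Fin d → ℝ)) (i : Fin d) {b K : ℕ}
    (hP : P.card < (K + 1) * (b + 1)) :
    ∃ j ≤ K, (P.filter fun x => x i ∈ Set.Ioo ((j : ℝ) / (K + 1)) (j / (K + 1) + 1 / (K + 1))).card
      ≤ b := by
  classical
  obtain ⟨j, hj, hcard⟩ := Finset.exists_card_fiber_lt_of_card_lt_mul
    (f := fun x : Fin d → ℝ => ⌊x i * (K + 1)⌋₊) (t := Finset.range (K + 1))
    (by rwa [Finset.card_range])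
  refine ⟨j, Nat.lt_succ_iff.1 (Finset.mem_range.1 hj), Nat.lt_succ_iff.1 (lt_of_le_of_lt ?_ hcard)⟩
  refine Finset.card_le_card fun x hx => ?_
  obtain ⟨hx, hlo, hhi⟩ := Finset.mem_filter.1 hx
  rw [← add_div, lt_div_iff₀ (by positivity)] at hhi
  rw [div_lt_iff₀ (by positivity)] at hlo
  exact Finset.mem_filter.2 ⟨hx, (Nat.floor_eq_iff (j.cast_nonneg.trans hlo.le)).2 ⟨hlo.le, hhi⟩⟩

lemma mdn_le_mul_mdn (hd : 1 ≤ d) (b n : ℕ) :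
    mdn d b ≤ ((n / (b + 1) : ℕ) + 1) * mdn d n := by
  set K := n / (b + 1) with hK
  have hW : (0 : ℝ) < K + 1 := by positivity
  rw [← div_le_iff₀' hW]
  refine le_mdn hd fun P hP hcard => ?_
  let i : Fin d := ⟨0, hd⟩
  obtain ⟨j, hjK, hslab⟩ := exists_slab_card_le P i (b := b) (K := K) (by
    have := Nat.lt_div_mul_add (a := n) (b := b + 1) (Nat.succ_pos b)
    rw [← hK] at this
    rw [hcard]; linarith)
  have hjK' : (j : ℝ) + 1 ≤ K + 1 := by exact_mod_cast Nat.succ_le_succ hjK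
  have hc : 0 ≤ (j : ℝ) / (K + 1) := by positivity
  have hcw : (j : ℝ) / (K + 1) + 1 / (K + 1) ≤ 1 := by
    rw [← add_div, div_le_one hW]; exact hjK'
  rw [div_le_iff₀' hW]
  calc mdn d b ≤ dispersion d _ :=
        mdn_le_dispersion_of_card_le hd
          (by
            simp only [Finset.coe_image, Finset.coe_filter, Set.image_subset_iff]
            exact fun x hx => stretch_mem_unitCube (by positivity) (hP hx.1) hx.2)
          (Finset.card_image_le.trans hslab)
    _ ≤ (K + 1) * dispersion d P := by
        have := mul_dispersion_stretch_le P i hc (by positivity : (0 : ℝ) < 1 / (K + 1)) hcw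
        rwa [one_div_mul_eq_div, div_le_iff₀' hW] at this

section Digits

variable {p : ℕ}

lemma sum_Ico_digit_div_pow_le (hp : 0 < p) {c : ℕ → ℕ} (hc : ∀ j, c j < p) {k m : ℕ}
    (hkm : k ≤ m) :
    ∑ j ∈ Finset.Ico k m, (c j : ℝ) / (p : ℝ) ^ (j + 1) ≤ 1 / (p : ℝ) ^ k - 1 / (p : ℝ) ^ m := by
  induction m, hkm using Nat.le_induction with
  | base => simp
  | succ m hkm ih =>
    have hcm : (c m : ℝ) ≤ p - 1 := by
      have := hc m
      rw [le_sub_iff_add_le]; exact_mod_cast this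
    have hterm : (c m : ℝ) / (p : ℝ) ^ (m + 1) ≤ 1 / (p : ℝ) ^ m - 1 / (p : ℝ) ^ (m + 1) := by
      rw [show 1 / (p : ℝ) ^ m - 1 / (p : ℝ) ^ (m + 1) = (p - 1) / (p : ℝ) ^ (m + 1) by
        field_simp; ring]
      gcongr
    rw [Finset.sum_Ico_succ_top hkm]
    linarith

lemma sum_digit_div_pow_mem_Ico (hp : 0 < p) {c : ℕ → ℕ} (hc : ∀ j, c j < p) {k m : ℕ}
    (hkm : k ≤ m) :
    ∑ j ∈ Finset.range m, (c j : ℝ) / (p : ℝ) ^ (j + 1) ∈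
      Set.Ico ((∑ j ∈ Finset.range k, c j * p ^ (k - 1 - j) : ℕ) / (p : ℝ) ^ k)
        (((∑ j ∈ Finset.range k, c j * p ^ (k - 1 - j) : ℕ) + 1) / (p : ℝ) ^ k) := by
  have hhead : ∑ j ∈ Finset.range k, (c j : ℝ) / (p : ℝ) ^ (j + 1) =
      (∑ j ∈ Finset.range k, c j * p ^ (k - 1 - j) : ℕ) / (p : ℝ) ^ k := by
    push_cast
    rw [Finset.sum_div]
    refine Finset.sum_congr rfl fun j hj => ?_
    rw [div_eq_div_iff (by positivity) (by positivity), mul_assoc, ← pow_add]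
    congr 2
    have := Finset.mem_range.1 hj
    omega
  have htail := sum_Ico_digit_div_pow_le hp hc hkm
  have htail0 : 0 ≤ ∑ j ∈ Finset.Ico k m, (c j : ℝ) / (p : ℝ) ^ (j + 1) :=
    Finset.sum_nonneg fun j _ => by positivity
  have hpm : 0 < 1 / (p : ℝ) ^ m := by positivity
  rw [← Finset.sum_range_add_sum_Ico _ hkm, hhead, add_div _ 1]
  exact ⟨by linarith, by linarith⟩

lemma exists_digits {k l : ℕ} (hl : l < p ^ k) :
    ∃ c : Fin k → Fin p, ∑ j : Fin k, (c j : ℕ) * p ^ (k - 1 - j) = l := by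
  refine ⟨fun j => finFunctionFinEquiv.symm ⟨l, hl⟩ j.rev, ?_⟩
  conv_rhs => rw [show l = (finFunctionFinEquiv (finFunctionFinEquiv.symm ⟨l, hl⟩) : ℕ) by simp]
  rw [finFunctionFinEquiv_apply]
  refine Fintype.sum_equiv Fin.revPerm _ _ fun j => ?_
  simp only [Fin.revPerm_apply, Fin.val_rev]
  congr 2
  omega

end Digits

lemma exists_nat_div_mem_Ioo {a b : ℝ} (ha : 0 ≤ a) (hb : b ≤ 1) {N : ℕ} (hN : 2 < (b - a) * N) :
    ∃ l < N, a < l / N ∧ (l + 1) / N ≤ b := by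
  have hN0 : (0 : ℝ) < N := Nat.cast_pos.2 (Nat.pos_of_ne_zero fun h => by norm_num [h] at hN)
  have hfloor := Nat.lt_floor_add_one (a * N)
  have hfloor' := Nat.floor_le (mul_nonneg ha hN0.le)
  refine ⟨⌊a * N⌋₊ + 1, ?_, ?_, ?_⟩
  · have : ((⌊a * N⌋₊ + 1 : ℕ) : ℝ) < N := by push_cast; nlinarith
    exact_mod_cast this
  · rw [lt_div_iff₀ hN0]; push_cast; linarith
  · rw [div_le_iff₀ hN0]; push_cast; linarith

lemma exists_sum_eq_two_lt_mul_pow {ι : Type*} [Fintype ι] [Nonempty ι] {q : ℝ} (hq : 1 < q)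
    {s : ι → ℝ} (hs : ∀ i, 0 < s i ∧ s i ≤ 1) {m : ℕ}
    (h : (2 * q) ^ Fintype.card ι < q ^ m * ∏ i, s i) :
    ∃ k : ι → ℕ, ∑ i, k i = m ∧ ∀ i, 2 < s i * q ^ k i := by
  classical
  have hq0 : 0 < q := by linarith
  have hscale : ∀ i, ∃ n : ℕ, 2 < s i * q ^ n ∧ s i * q ^ n ≤ 2 * q := by
    intro i
    obtain ⟨hs0, hs1⟩ := hs i
    obtain ⟨n, hle, hlt⟩ :=
      exists_nat_pow_near (x := 2 / s i) (by rw [le_div_iff₀ hs0]; linarith) hq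
    refine ⟨n + 1, by rwa [div_lt_iff₀' hs0] at hlt, ?_⟩
    rw [le_div_iff₀' hs0] at hle
    rw [pow_succ, ← mul_assoc]
    exact mul_le_mul_of_nonneg_right hle hq0.le
  choose k₀ hk₀ hk₀' using hscale
  have hsum : ∑ i, k₀ i < m := by
    by_contra! hle
    have hprod : q ^ (∑ i, k₀ i) * ∏ i, s i ≤ (2 * q) ^ Fintype.card ι := by
      calc q ^ (∑ i, k₀ i) * ∏ i, s i = ∏ i, (s i * q ^ k₀ i) := by
            rw [Finset.prod_mul_distrib, Finset.prod_pow_eq_pow_sum, mul_comm]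
        _ ≤ ∏ _i : ι, 2 * q := Finset.prod_le_prod (fun i _ => by positivity [(hs i).1])
            fun i _ => hk₀' i
        _ = (2 * q) ^ Fintype.card ι := by rw [Finset.prod_const, Finset.card_univ]
    have := mul_le_mul_of_nonneg_right (pow_le_pow_right₀ hq.le hle)
      (Finset.prod_nonneg fun i (_ : i ∈ Finset.univ) => (hs i).1.le)
    linarith
  let i₀ : ι := Classical.arbitrary ι
  refine ⟨k₀ + Pi.single i₀ (m - ∑ i, k₀ i), ?_, fun i => (hk₀ i).trans_le ?_⟩
  · simp only [Pi.add_apply]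
    rw [Finset.sum_add_distrib, Finset.sum_pi_single', if_pos (Finset.mem_univ _)]
    omega
  · gcongr
    · exact (hs i).1.le
    · exact hq.le
    · exact Nat.le_add_right _ _

section Net

open Polynomial

variable {p : ℕ} [Fact p.Prime]

/-- Niederreiter's construction of a `(0, m, d)`-net in base `p`. -/
noncomputable def netPoint (p m d : ℕ) (f : (ZMod p)[X]) : Fin d → ℝ :=
  fun i => ∑ j ∈ Finset.range m, ((taylor ((i : ℕ) : ZMod p) f).coeff j).val / (p : ℝ) ^ (j + 1)

noncomputable def net (p m d : ℕ) [Fact p.Prime] : Finset (Fin d → ℝ) :=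
  Finset.univ.image fun v : Fin m → ZMod p => netPoint p m d ((degreeLTEquiv (ZMod p) m).symm v)

lemma card_net_le (m : ℕ) : (net p m d).card ≤ p ^ m :=
  Finset.card_image_le.trans (by simp)

lemma netPoint_mem_unitCube (m : ℕ) (f : (ZMod p)[X]) : netPoint p m d f ∈ unitCube d := by
  intro i
  have := sum_digit_div_pow_mem_Ico (Fact.out : p.Prime).pos (fun j => ZMod.val_lt _)
    (Nat.zero_le m) (c := fun j => ((taylor ((i : ℕ) : ZMod p) f).coeff j).val)
  simp only [Finset.range_zero, Finset.sum_empty, pow_zero, Nat.cast_zero, div_one, zero_add,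
    Set.mem_Ico] at this
  exact ⟨this.1, this.2.le⟩

lemma net_subset_unitCube (m : ℕ) : ↑(net p m d) ⊆ unitCube d := by
  intro x hx
  obtain ⟨v, -, rfl⟩ := Finset.mem_image.1 hx
  exact netPoint_mem_unitCube m _

lemma exists_mem_net_forall_mem_Ico (hdp : d ≤ p) {m : ℕ} {k l : Fin d → ℕ} (hkm : ∑ i, k i = m)
    (hl : ∀ i, l i < p ^ k i) :
    ∃ x ∈ net p m d, ∀ i,
      x i ∈ Set.Ico ((l i : ℝ) / (p : ℝ) ^ k i) ((l i + 1) / (p : ℝ) ^ k i) := by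
  have hp : p.Prime := Fact.out
  choose c hc using fun i => exists_digits (hl i)
  have hα : Function.Injective fun i : Fin d => ((i : ℕ) : ZMod p) := fun i j hij => by
    have := congrArg ZMod.val hij
    simp only [ZMod.val_natCast, Nat.mod_eq_of_lt (i.2.trans_le hdp),
      Nat.mod_eq_of_lt (j.2.trans_le hdp)] at this
    exact Fin.ext this
  obtain ⟨f, hf, hft⟩ := exists_taylor_coeff_eq hα k fun i j => ((c i j : ℕ) : ZMod p)
  rw [hkm] at hf
  refine ⟨netPoint p m d f, Finset.mem_image.2 ⟨degreeLTEquiv _ _ ⟨f, hf⟩, Finset.mem_univ _,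
    by simp⟩, fun i => ?_⟩
  have hdigits : ∑ j ∈ Finset.range (k i),
      ((taylor ((i : ℕ) : ZMod p) f).coeff j).val * p ^ (k i - 1 - j) = l i := by
    rw [Finset.sum_range, ← hc i]
    refine Finset.sum_congr rfl fun j _ => ?_
    rw [hft, ZMod.val_natCast_of_lt (c i j).2]
  have hmem := sum_digit_div_pow_mem_Ico hp.pos (fun j => ZMod.val_lt _)
    (hkm ▸ Finset.single_le_sum (fun j _ => Nat.zero_le (k j)) (Finset.mem_univ i))
    (c := fun j => ((taylor ((i : ℕ) : ZMod p) f).coeff j).val) (m := m)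
  rwa [hdigits] at hmem

/-- Such a box contains a box `∏ i, [l i / p ^ k i, (l i + 1) / p ^ k i)` with `∑ i, k i = m`. -/
lemma exists_mem_net_forall_mem_Ioo (hd : 1 ≤ d) (hdp : d ≤ p) {m : ℕ} {a b : Fin d → ℝ}
    (hab : ∀ i, 0 ≤ a i ∧ a i < b i ∧ b i ≤ 1)
    (hvol : (2 * (p : ℝ)) ^ d < (p : ℝ) ^ m * ∏ i, (b i - a i)) :
    ∃ x ∈ net p m d, ∀ i, x i ∈ Set.Ioo (a i) (b i) := by
  have : Nonempty (Fin d) := ⟨⟨0, hd⟩⟩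
  obtain ⟨k, hkm, hk⟩ := exists_sum_eq_two_lt_mul_pow (q := p) (s := fun i => b i - a i)
    (by exact_mod_cast (Fact.out : p.Prime).one_lt)
    (fun i => ⟨sub_pos.2 (hab i).2.1, by linarith [hab i]⟩) (by simpa using hvol)
  have hl : ∀ i, ∃ l < p ^ k i, a i < l / (p : ℝ) ^ k i ∧ (l + 1) / (p : ℝ) ^ k i ≤ b i := by
    intro i
    simpa using exists_nat_div_mem_Ioo (hab i).1 (hab i).2.2 (N := p ^ k i) (by simpa using hk i)
  choose l hlp hal hlb using hl
  obtain ⟨x, hx, hxl⟩ := exists_mem_net_forall_mem_Ico hdp hkm hlp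
  exact ⟨x, hx, fun i => ⟨(hal i).trans_le (hxl i).1, (hxl i).2.trans_le (hlb i)⟩⟩

lemma dispersion_net_le (hd : 1 ≤ d) (hdp : d ≤ p) (m : ℕ) :
    dispersion d (net p m d) ≤ (2 * (p : ℝ)) ^ d / (p : ℝ) ^ m := by
  have hp : (0 : ℝ) < p := by exact_mod_cast (Fact.out : p.Prime).pos
  refine dispersion_le (by positivity) fun a b hab => ?_
  by_contra! hlt
  rw [div_lt_iff₀' (by positivity)] at hlt
  obtain ⟨x, hx, hxab⟩ := exists_mem_net_forall_mem_Ioo hd hdp hab.1 hlt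
  obtain ⟨i, hi⟩ := hab.2 x hx
  exact hi (hxab i)

lemma exists_succ_mul_mdn_le (hd : 1 ≤ d) : ∃ C, ∀ n : ℕ, ((n : ℝ) + 1) * mdn d n ≤ C := by
  obtain ⟨p, hdp, hp⟩ := Nat.exists_infinite_primes d
  have := Fact.mk hp
  have hp1 : (1 : ℝ) ≤ p := by exact_mod_cast hp.one_lt.le
  refine ⟨p * (2 * p) ^ d, fun n => ?_⟩
  rcases Nat.eq_zero_or_pos n with rfl | hn
  · rw [Nat.cast_zero, zero_add, one_mul]
    exact (mdn_le_one hd 0).trans (one_le_mul_of_one_le_of_one_le hp1 (one_le_pow₀ (by linarith)))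
  set m := Nat.log p n
  have hnet : ((n : ℝ) + 1) ≤ (p : ℝ) ^ (m + 1) := by
    exact_mod_cast Nat.lt_pow_succ_log_self hp.one_lt n
  have hmdn : mdn d n ≤ (2 * (p : ℝ)) ^ d / (p : ℝ) ^ m :=
    (mdn_le_dispersion_of_card_le hd (net_subset_unitCube m)
      ((card_net_le m).trans (Nat.pow_log_le_self p hn.ne'))).trans (dispersion_net_le hd hdp m)
  calc ((n : ℝ) + 1) * mdn d n ≤ (p : ℝ) ^ (m + 1) * ((2 * (p : ℝ)) ^ d / (p : ℝ) ^ m) :=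
        mul_le_mul hnet hmdn (mdn_nonneg d n) (by positivity)
    _ = p * (2 * p) ^ d := by
        field_simp
        ring

end Net

lemma succ_mul_mdn_le (hd : 1 ≤ d) (b n : ℕ) :
    ((b : ℝ) + 1) * mdn d b ≤ ((n : ℝ) + 1) * mdn d n + b * mdn d n := by
  have hK : ((n / (b + 1) : ℕ) : ℝ) * (b + 1) ≤ n := by exact_mod_cast Nat.div_mul_le_self n (b + 1)
  calc ((b : ℝ) + 1) * mdn d b ≤ (b + 1) * (((n / (b + 1) : ℕ) + 1) * mdn d n) := by
        gcongr; exact mdn_le_mul_mdn hd b n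
    _ ≤ ((n : ℝ) + 1) * mdn d n + b * mdn d n := by nlinarith [mdn_nonneg d n]

end Dispersion

/-- `(n+1)·m_d(n) ≥ (b+1)·m_d(b) − o(1)` as `n → ∞`, and consequently
the limit `c_d = lim n·m_d(n)` exists. -/
theorem stmt_1 (d : ℕ) (hd : 1 ≤ d) :
    (∀ b : ℕ, 1 ≤ b → ∀ ε : ℝ, 0 < ε →
      ∀ᶠ n : ℕ in Filter.atTop,
        ((n : ℝ) + 1) * mdn d n ≥ ((b : ℝ) + 1) * mdn d b - ε) ∧
    ∃ c : ℝ, Filter.Tendsto (fun n : ℕ => (n : ℝ) * mdn d n) Filter.atTop (nhds c) := by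
  obtain ⟨C, hC⟩ := Dispersion.exists_succ_mul_mdn_le hd
  have hmdn : Tendsto (mdn d) atTop (𝓝 0) := by
    have hC0 := tendsto_one_div_add_atTop_nhds_zero_nat.const_mul C
    rw [mul_zero] at hC0
    refine squeeze_zero (Dispersion.mdn_nonneg d) (fun n => ?_) hC0
    rw [mul_one_div, le_div_iff₀' (by positivity)]
    exact hC n
  have hsub : ∀ b : ℕ, ∀ ε > 0,
      ∀ᶠ n : ℕ in atTop, ((b : ℝ) + 1) * mdn d b - ε ≤ ((n : ℝ) + 1) * mdn d n := by
    intro b ε hε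
    filter_upwards [(hmdn.const_mul (b : ℝ)).eventually (gt_mem_nhds (by simpa using hε))]
      with n hn
    linarith [Dispersion.succ_mul_mdn_le hd b n]
  have hlim := (tendsto_ciSup_of_forall_eventually_sub_le
    ⟨C, by rintro _ ⟨n, rfl⟩; exact hC n⟩ hsub).sub hmdn
  rw [sub_zero] at hlim
  exact ⟨fun b _ ε hε => hsub b ε hε, _, hlim.congr fun n => by ring⟩
end

section
/- Let δ > 0 and let B = [−δ, δ]^d. Let P' be a finite set of points in B, and suppose each point p ∈ P' is assigned a 'dominant' coordinate i such that |p_i| = ‖p‖_∞. For each i ∈ [d], let a_i be the minimum of −p_i over points p with dominant coordinate i and p_i ≤ 0 (set a_i = δ if no such point exists), and let b_i be the minimum of p_i over points p with dominant coordinate i and p_i ≥ 0 (set b_i = δ if no such point exists). Then the box B' = ∏_i (−a_i, b_i) is disjoint from P' and has volume at least (2δ)^d · ∏_{p ∈ P'} sqrt(‖p‖_∞ / δ). -/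
open Finset

/-- Shaving the sides off the cube `[−δ,δ]^d` according to dominant coordinates produces a box
`∏ (−aᵢ, bᵢ)` disjoint from `P'` of volume at least `(2δ)^d ∏_{p∈P'} sqrt(‖p‖_∞/δ)`. -/
theorem stmt_3 (d : ℕ) (δ : ℝ) (hδ : 0 < δ)
    (P' : Finset (Fin d → ℝ)) (dom : (Fin d → ℝ) → Fin d)
    (hdom : ∀ p ∈ P', ∀ i, |p i| ≤ |p (dom p)|)
    (hPB : ∀ p ∈ P', ∀ i, |p i| ≤ δ)
    (a b : Fin d → ℝ)
    (ha_le : ∀ i, a i ≤ δ) (hb_le : ∀ i, b i ≤ δ)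
    (ha_min : ∀ i, ∀ p ∈ P', dom p = i → p i ≤ 0 → a i ≤ -p i)
    (hb_min : ∀ i, ∀ p ∈ P', dom p = i → 0 ≤ p i → b i ≤ p i)
    (ha_att : ∀ i, a i = δ ∨ ∃ p ∈ P', dom p = i ∧ p i ≤ 0 ∧ a i = -p i)
    (hb_att : ∀ i, b i = δ ∨ ∃ p ∈ P', dom p = i ∧ 0 ≤ p i ∧ b i = p i) :
    (∀ p ∈ P', ∃ i, p i ∉ Set.Ioo (-(a i)) (b i)) ∧
    (2*δ)^d * ∏ p ∈ P', Real.sqrt (|p (dom p)| / δ) ≤ ∏ i, (a i + b i) := by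
  have ha0 : ∀ i, 0 ≤ a i := by
    intro i
    rcases ha_att i with h | ⟨p, _, _, hp0, he⟩
    · linarith
    · linarith
  have hb0 : ∀ i, 0 ≤ b i := by
    intro i
    rcases hb_att i with h | ⟨p, _, _, hp0, he⟩
    · linarith
    · linarith
  constructor
  · intro p hp
    refine ⟨dom p, ?_⟩
    simp only [Set.mem_Ioo, not_and_or, not_lt]
    rcases le_or_gt (p (dom p)) 0 with h | h
    · have := ha_min (dom p) p hp rfl h
      left; linarith
    · have := hb_min (dom p) p hp rfl h.le
      right; linarith
  · by_cases h0 : ∃ p ∈ P', p (dom p) = 0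
    · obtain ⟨q, hq, hq0⟩ := h0
      have hz : ∏ p ∈ P', Real.sqrt (|p (dom p)| / δ) = 0 :=
        Finset.prod_eq_zero hq (by simp [hq0])
      rw [hz, mul_zero]
      exact Finset.prod_nonneg fun i _ => by linarith [ha0 i, hb0 i]
    · push_neg at h0
      -- each factor ≤ 1 and ≥ 0
      have hf01 : ∀ p ∈ P', Real.sqrt (|p (dom p)| / δ) ≤ 1 := by
        intro p hp
        rw [Real.sqrt_le_one]
        rw [div_le_one hδ]
        exact hPB p hp (dom p)
      have key : ∀ i, 2*δ * ∏ p ∈ P' with dom p = i, Real.sqrt (|p (dom p)| / δ)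
          ≤ a i + b i := by
        intro i
        set s := P'.filter (fun p => dom p = i) with hs
        have hmem : ∀ p ∈ s, p ∈ P' ∧ dom p = i := fun p hp => Finset.mem_filter.mp hp
        have hsplit : ∏ p ∈ s, Real.sqrt (|p (dom p)| / δ)
            = (∏ p ∈ s with p i < 0, Real.sqrt (|p (dom p)| / δ))
              * ∏ p ∈ s with ¬ p i < 0, Real.sqrt (|p (dom p)| / δ) :=
          (Finset.prod_filter_mul_prod_filter_not s _ _).symm
        have hA : ∏ p ∈ s with p i < 0, Real.sqrt (|p (dom p)| / δ)
            ≤ Real.sqrt (a i / δ) := by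
          rcases ha_att i with h | ⟨q, hq, hqd, hq0, he⟩
          · rw [h, div_self hδ.ne', Real.sqrt_one]
            exact Finset.prod_le_one (fun p _ => Real.sqrt_nonneg _)
              (fun p hp => hf01 p ((hmem p (Finset.mem_filter.mp hp).1).1))
          · have hqneg : q i < 0 := by
              rcases lt_or_eq_of_le hq0 with h' | h'
              · exact h'
              · exact absurd (hqd ▸ h') (h0 q hq)
            have hqmem : q ∈ (s.filter (fun p => p i < 0)) := by
              simp [hs, Finset.mem_filter, hq, hqd, hqneg]
            have hval : Real.sqrt (|q (dom q)| / δ) = Real.sqrt (a i / δ) := by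
              rw [hqd, abs_of_neg hqneg, he]
            calc ∏ p ∈ s with p i < 0, Real.sqrt (|p (dom p)| / δ)
                = (∏ p ∈ (s.filter (fun p => p i < 0)).erase q,
                    Real.sqrt (|p (dom p)| / δ)) * Real.sqrt (|q (dom q)| / δ) :=
                  (Finset.prod_erase_mul _ _ hqmem).symm
              _ ≤ 1 * Real.sqrt (|q (dom q)| / δ) := by
                  apply mul_le_mul_of_nonneg_right _ (Real.sqrt_nonneg _)
                  exact Finset.prod_le_one (fun p _ => Real.sqrt_nonneg _)
                    (fun p hp => hf01 p
                      ((hmem p (Finset.mem_filter.mp (Finset.mem_of_mem_erase hp)).1).1))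
              _ = Real.sqrt (a i / δ) := by rw [one_mul, hval]
        have hB : ∏ p ∈ s with ¬ p i < 0, Real.sqrt (|p (dom p)| / δ)
            ≤ Real.sqrt (b i / δ) := by
          rcases hb_att i with h | ⟨q, hq, hqd, hq0, he⟩
          · rw [h, div_self hδ.ne', Real.sqrt_one]
            exact Finset.prod_le_one (fun p _ => Real.sqrt_nonneg _)
              (fun p hp => hf01 p ((hmem p (Finset.mem_filter.mp hp).1).1))
          · have hqpos : 0 < q i := by
              rcases lt_or_eq_of_le hq0 with h' | h'
              · exact h'
              · exact absurd (hqd ▸ h'.symm) (h0 q hq)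
            have hqmem : q ∈ (s.filter (fun p => ¬ p i < 0)) := by
              simp [hs, Finset.mem_filter, hq, hqd, hqpos.le, not_lt]
            have hval : Real.sqrt (|q (dom q)| / δ) = Real.sqrt (b i / δ) := by
              rw [hqd, abs_of_pos hqpos, he]
            calc ∏ p ∈ s with ¬ p i < 0, Real.sqrt (|p (dom p)| / δ)
                = (∏ p ∈ (s.filter (fun p => ¬ p i < 0)).erase q,
                    Real.sqrt (|p (dom p)| / δ)) * Real.sqrt (|q (dom q)| / δ) :=
                  (Finset.prod_erase_mul _ _ hqmem).symm
              _ ≤ 1 * Real.sqrt (|q (dom q)| / δ) := by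
                  apply mul_le_mul_of_nonneg_right _ (Real.sqrt_nonneg _)
                  exact Finset.prod_le_one (fun p _ => Real.sqrt_nonneg _)
                    (fun p hp => hf01 p
                      ((hmem p (Finset.mem_filter.mp (Finset.mem_of_mem_erase hp)).1).1))
              _ = Real.sqrt (b i / δ) := by rw [one_mul, hval]
        have hprod : ∏ p ∈ s, Real.sqrt (|p (dom p)| / δ)
            ≤ Real.sqrt (a i / δ) * Real.sqrt (b i / δ) := by
          rw [hsplit]
          exact mul_le_mul hA hB (Finset.prod_nonneg fun p _ => Real.sqrt_nonneg _)
            (Real.sqrt_nonneg _)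
        have hx : Real.sqrt (a i / δ) ^ 2 = a i / δ :=
          Real.sq_sqrt (div_nonneg (ha0 i) hδ.le)
        have hy : Real.sqrt (b i / δ) ^ 2 = b i / δ :=
          Real.sq_sqrt (div_nonneg (hb0 i) hδ.le)
        have hx' : δ * Real.sqrt (a i / δ) ^ 2 = a i := by
          rw [hx]; field_simp
        have hy' : δ * Real.sqrt (b i / δ) ^ 2 = b i := by
          rw [hy]; field_simp
        have h2 : 2*δ * (Real.sqrt (a i / δ) * Real.sqrt (b i / δ)) ≤ a i + b i := by
          nlinarith [mul_nonneg hδ.le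
            (sq_nonneg (Real.sqrt (a i / δ) - Real.sqrt (b i / δ)))]
        calc 2*δ * ∏ p ∈ s, Real.sqrt (|p (dom p)| / δ)
            ≤ 2*δ * (Real.sqrt (a i / δ) * Real.sqrt (b i / δ)) := by
              apply mul_le_mul_of_nonneg_left hprod (by linarith)
          _ ≤ a i + b i := h2
      calc (2*δ)^d * ∏ p ∈ P', Real.sqrt (|p (dom p)| / δ)
          = ∏ i : Fin d, (2*δ * ∏ p ∈ P' with dom p = i, Real.sqrt (|p (dom p)| / δ)) := by
            rw [Finset.prod_mul_distrib, Finset.prod_const, Finset.card_univ,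
              Fintype.card_fin,
              Finset.prod_fiberwise_of_maps_to (fun p _ => Finset.mem_univ (dom p))]
        _ ≤ ∏ i, (a i + b i) := by
            apply Finset.prod_le_prod _ (fun i _ => key i)
            intro i _
            have : (0:ℝ) ≤ ∏ p ∈ P' with dom p = i, Real.sqrt (|p (dom p)| / δ) :=
              Finset.prod_nonneg fun p _ => Real.sqrt_nonneg _
            nlinarith
end

section
/- Let p ≥ 3 be a prime (or any integer ≥ 3). Every half-open interval [s, u) ⊆ [0, 1) contains a half-open interval of the form [a/p^{k+1}, b/p^{k+1}) with integers 0 ≤ a < b, b − a < p^2, and length at least (1 − 2/p)·(u − s). -/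
/-- Every half-open interval `[s,u) ⊆ [0,1)` contains a well-shrunk `p`-interval
`[a/p^{k+1}, b/p^{k+1})` with `b − a < p²` and length at least `(1 − 2/p)(u − s)`. -/
theorem stmt_10 (p : ℕ) (hp : 3 ≤ p) (s u : ℝ)
    (hs : 0 ≤ s) (hsu : s < u) (hu : u ≤ 1) :
    ∃ (k a b : ℕ), a < b ∧ b - a < p^2 ∧
      s ≤ (a : ℝ) / (p:ℝ)^(k+1) ∧ (b : ℝ) / (p:ℝ)^(k+1) ≤ u ∧
      (1 - 2/(p:ℝ)) * (u - s) ≤ ((b : ℝ) - (a : ℝ)) / (p:ℝ)^(k+1) := by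
  classical
  have hp3 : (3:ℝ) ≤ (p:ℝ) := by exact_mod_cast hp
  have hp1 : (1:ℝ) < (p:ℝ) := by linarith
  have hp0 : (0:ℝ) < (p:ℝ) := by linarith
  set L : ℝ := u - s with hLdef
  have hL0 : 0 < L := by simp only [hLdef]; linarith
  have hL1 : L ≤ 1 := by simp only [hLdef]; linarith
  have hex : ∃ n : ℕ, 1 ≤ (p:ℝ)^n * L := by
    obtain ⟨n, hn⟩ := pow_unbounded_of_one_lt (1/L) hp1
    refine ⟨n, ?_⟩
    rw [one_div] at hn
    have := (inv_lt_iff_one_lt_mul₀ hL0).mp hn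
    nlinarith
  set k := Nat.find hex with hkdef
  have hk1 : 1 ≤ (p:ℝ)^k * L := Nat.find_spec hex
  have hk2 : (p:ℝ)^k * L < (p:ℝ) := by
    rcases Nat.eq_zero_or_pos k with h0 | hpos
    · rw [h0, pow_zero, one_mul]; linarith
    · have hmin := Nat.find_min hex (m := k - 1) (Nat.sub_lt hpos one_pos)
      push_neg at hmin
      have hkk : k = (k - 1) + 1 := (Nat.succ_pred_eq_of_pos hpos).symm
      have : (p:ℝ)^k = (p:ℝ) * (p:ℝ)^(k-1) := by
        conv_lhs => rw [hkk]
        rw [pow_succ]; ring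
      rw [this]
      have hpw : (0:ℝ) < (p:ℝ)^(k-1) * L := by positivity
      nlinarith
  set P : ℝ := (p:ℝ)^(k+1) with hPdef
  have hP0 : 0 < P := by positivity
  have hPL : P * L = (p:ℝ) * ((p:ℝ)^k * L) := by rw [hPdef]; ring
  set a : ℕ := ⌈s * P⌉₊ with hadef
  set b : ℕ := ⌊u * P⌋₊ with hbdef
  have hsP : 0 ≤ s * P := by positivity
  have huP : 0 ≤ u * P := by nlinarith
  have ha1 : s * P ≤ (a:ℝ) := Nat.le_ceil _
  have ha2 : (a:ℝ) < s * P + 1 := Nat.ceil_lt_add_one hsP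
  have hb1 : (b:ℝ) ≤ u * P := Nat.floor_le huP
  have hb2 : u * P - 1 < (b:ℝ) := Nat.sub_one_lt_floor _
  have hdiff : (p:ℝ) - 2 < (b:ℝ) - (a:ℝ) := by nlinarith
  have hab : a < b := by
    have : (a:ℝ) < (b:ℝ) := by linarith
    exact_mod_cast this
  refine ⟨k, a, b, hab, ?_, ?_, ?_, ?_⟩
  · have : (b:ℝ) - (a:ℝ) < (p:ℝ)^2 := by nlinarith
    have hb' : (b:ℝ) < (a:ℝ) + (p:ℝ)^2 := by linarith
    have : b < a + p^2 := by exact_mod_cast hb'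
    omega
  · rw [le_div_iff₀ hP0]; linarith
  · rw [div_le_iff₀ hP0]; linarith
  · rw [le_div_iff₀ hP0]
    have h2 : 2 ≤ (p:ℝ) * ((p:ℝ)^k * L) := by nlinarith
    have : (1 - 2/(p:ℝ)) * L * P = L * P - 2 * ((p:ℝ)^k * L) := by
      field_simp
      ring
    nlinarith
end

section
/- Let p be a prime with p > 2d + 1 and let Δ = 1/(p(p−1)). For any half-open interval [s, u) ⊆ [1/p, 1], at most one of the d+1 translated intervals [s, u) − 2rΔ for r = 0, 1, ..., d is p-bad. -/
/-- An interval `[s,u)` is `p`-bad if for some `k ≥ 0` it has length `< 2p^{−k−2}`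
and contains a rational with denominator `p^{k+1}`. -/
def pBad (p : ℕ) (s u : ℝ) : Prop :=
  ∃ k : ℕ, u - s < 2 / (p:ℝ)^(k+2) ∧ ∃ a : ℤ, (a:ℝ) / (p:ℝ)^(k+1) ∈ Set.Ico s u

/-- For a prime `p > 2d+1` and `Δ = 1/(p(p−1))`, at most one of the translates
`[s,u) − 2rΔ`, `r = 0,…,d`, of an interval `[s,u) ⊆ [1/p,1]` is `p`-bad. -/
theorem stmt_11 (p d : ℕ) (hp : p.Prime) (hpd : 2*d + 1 < p)
    (Δ : ℝ) (hΔ : Δ = 1 / ((p:ℝ) * ((p:ℝ) - 1)))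
    (s u : ℝ) (hs : 1/(p:ℝ) ≤ s) (hsu : s < u) (hu : u ≤ 1) :
    ∀ r₁, r₁ ≤ d → ∀ r₂, r₂ ≤ d →
      pBad p (s - 2*r₁*Δ) (u - 2*r₁*Δ) → pBad p (s - 2*r₂*Δ) (u - 2*r₂*Δ) → r₁ = r₂ := by
  intro r₁ hr₁ r₂ hr₂ hb₁ hb₂
  rcases Nat.eq_zero_or_pos d with hd | hd
  · omega
  -- p ≥ 5 and odd
  have hp5 : 5 ≤ p := by
    have h4 : p ≠ 4 := by intro h; rw [h] at hp; exact absurd hp (by decide)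
    omega
  have hPpos : (0:ℝ) < (p:ℝ) := by positivity
  have hP1 : (1:ℝ) < (p:ℝ) := by exact_mod_cast (by omega : 1 < p)
  obtain ⟨k₁, hl₁, a₁, hm₁⟩ := hb₁
  obtain ⟨k₂, hl₂, a₂, hm₂⟩ := hb₂
  set K := max k₁ k₂ with hK
  have hk1 : k₁ ≤ K := le_max_left _ _
  have hk2 : k₂ ≤ K := le_max_right _ _
  set N : ℤ := ((p:ℤ)-1) * (a₁ * (p:ℤ)^(K-k₁) - a₂ * (p:ℤ)^(K-k₂)) +
      2*((r₁:ℤ) - (r₂:ℤ))*(p:ℤ)^K with hN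
  set x₁ : ℝ := (a₁:ℝ)/(p:ℝ)^(k₁+1) + 2*r₁*Δ with hx₁
  set x₂ : ℝ := (a₂:ℝ)/(p:ℝ)^(k₂+1) + 2*r₂*Δ with hx₂
  have hpe1 : (p:ℝ)^(K+1) = (p:ℝ)^(k₁+1) * (p:ℝ)^(K-k₁) := by
    rw [← pow_add]; congr 1; omega
  have hpe2 : (p:ℝ)^(K+1) = (p:ℝ)^(k₂+1) * (p:ℝ)^(K-k₂) := by
    rw [← pow_add]; congr 1; omega
  have hNr : (N:ℝ) = (x₁ - x₂) * ((p:ℝ)^(K+1) * ((p:ℝ) - 1)) := by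
    have h1 : (a₁:ℝ)/(p:ℝ)^(k₁+1) * ((p:ℝ)^(K+1) * ((p:ℝ) - 1))
        = (a₁:ℝ) * (p:ℝ)^(K-k₁) * ((p:ℝ) - 1) := by
      rw [hpe1]; field_simp
    have h2 : (a₂:ℝ)/(p:ℝ)^(k₂+1) * ((p:ℝ)^(K+1) * ((p:ℝ) - 1))
        = (a₂:ℝ) * (p:ℝ)^(K-k₂) * ((p:ℝ) - 1) := by
      rw [hpe2]; field_simp
    have hP0 : (p:ℝ) ≠ 0 := ne_of_gt hPpos
    have hPm1 : (p:ℝ) - 1 ≠ 0 := by linarith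
    have hΔm : Δ * ((p:ℝ)^(K+1) * ((p:ℝ) - 1)) = (p:ℝ)^K := by
      rw [hΔ, pow_succ]; field_simp
    have : (x₁ - x₂) * ((p:ℝ)^(K+1) * ((p:ℝ) - 1))
        = (a₁:ℝ) * (p:ℝ)^(K-k₁) * ((p:ℝ) - 1) - (a₂:ℝ) * (p:ℝ)^(K-k₂) * ((p:ℝ) - 1)
          + 2*((r₁:ℝ) - (r₂:ℝ)) * (p:ℝ)^K := by
      rw [hx₁, hx₂]
      calc ((a₁:ℝ)/(p:ℝ)^(k₁+1) + 2*r₁*Δ - ((a₂:ℝ)/(p:ℝ)^(k₂+1) + 2*r₂*Δ))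
            * ((p:ℝ)^(K+1) * ((p:ℝ) - 1))
          = (a₁:ℝ)/(p:ℝ)^(k₁+1) * ((p:ℝ)^(K+1) * ((p:ℝ) - 1))
            - (a₂:ℝ)/(p:ℝ)^(k₂+1) * ((p:ℝ)^(K+1) * ((p:ℝ) - 1))
            + 2*((r₁:ℝ) - (r₂:ℝ)) * (Δ * ((p:ℝ)^(K+1) * ((p:ℝ) - 1))) := by ring
        _ = _ := by rw [h1, h2, hΔm]
    rw [this, hN]; push_cast; ring
  -- both x₁ x₂ in [s,u)
  have hx1m : s ≤ x₁ ∧ x₁ < u := by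
    rw [hx₁]
    obtain ⟨h1, h2⟩ := hm₁
    constructor <;> linarith
  have hx2m : s ≤ x₂ ∧ x₂ < u := by
    rw [hx₂]
    obtain ⟨h1, h2⟩ := hm₂
    constructor <;> linarith
  have hdiff : |x₁ - x₂| < u - s := by
    rw [abs_lt]
    obtain ⟨a, b⟩ := hx1m; obtain ⟨c, e⟩ := hx2m
    constructor <;> linarith
  have hl₁' : u - s < 2 / (p:ℝ)^(k₁+2) := by linarith
  have hl₂' : u - s < 2 / (p:ℝ)^(k₂+2) := by linarith
  have hus : u - s < 2 / (p:ℝ)^(K+2) := by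
    rcases max_cases k₁ k₂ with ⟨h, _⟩ | ⟨h, _⟩
    · rw [hK, h]; exact hl₁'
    · rw [hK, h]; exact hl₂' 
  have hfac : (0:ℝ) < (p:ℝ)^(K+1) * ((p:ℝ) - 1) := by
    apply mul_pos (by positivity); linarith
  have hNlt : |(N:ℝ)| < 2 := by
    rw [hNr, abs_mul, abs_of_pos hfac]
    have : |x₁ - x₂| * ((p:ℝ)^(K+1) * ((p:ℝ) - 1))
        < (2 / (p:ℝ)^(K+2)) * ((p:ℝ)^(K+1) * ((p:ℝ) - 1)) := by
      apply mul_lt_mul_of_pos_right _ hfac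
      linarith
    apply lt_of_lt_of_le this
    rw [pow_succ]
    rw [div_mul_eq_mul_div, div_le_iff₀ (by positivity)]
    ring_nf
    nlinarith [pow_pos hPpos K, pow_pos hPpos (K+1)]
  have hNb : -1 ≤ N ∧ N ≤ 1 := by
    have h2 : |N| < 2 := by exact_mod_cast (by push_cast; exact hNlt : |(N:ℝ)| < (2:ℝ))
    rw [abs_lt] at h2
    omega
  -- N is even
  have hodd : Odd p := hp.odd_of_ne_two (by omega)
  obtain ⟨m, hm⟩ : 2 ∣ (p:ℤ) - 1 := by
    obtain ⟨t, ht⟩ := hodd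
    refine ⟨(t:ℤ), ?_⟩
    have : (p:ℤ) = 2*t+1 := by exact_mod_cast ht
    omega
  have hNeven : 2 ∣ N := by
    rw [hN, hm]
    exact ⟨m * (a₁ * (p:ℤ)^(K-k₁) - a₂ * (p:ℤ)^(K-k₂)) + ((r₁:ℤ) - (r₂:ℤ))*(p:ℤ)^K, by ring⟩
  have hN0 : N = 0 := by omega
  -- (p-1) ∣ 2(r₁ - r₂)
  have hdvd1 : ((p:ℤ)-1) ∣ 2*((r₁:ℤ) - (r₂:ℤ))*(p:ℤ)^K := by
    have : 2*((r₁:ℤ) - (r₂:ℤ))*(p:ℤ)^K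
        = N - ((p:ℤ)-1) * (a₁ * (p:ℤ)^(K-k₁) - a₂ * (p:ℤ)^(K-k₂)) := by rw [hN]; ring
    rw [this, hN0]
    exact ⟨-(a₁ * (p:ℤ)^(K-k₁) - a₂ * (p:ℤ)^(K-k₂)), by ring⟩
  have hdvdp : ((p:ℤ)-1) ∣ (p:ℤ)^K - 1 := by
    simpa using sub_dvd_pow_sub_pow (p:ℤ) 1 K
  have hdvd2 : ((p:ℤ)-1) ∣ 2*((r₁:ℤ) - (r₂:ℤ)) := by
    have h := dvd_sub hdvd1 (Dvd.dvd.mul_left hdvdp (2*((r₁:ℤ) - (r₂:ℤ))))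
    have e : 2*((r₁:ℤ) - (r₂:ℤ))*(p:ℤ)^K - 2*((r₁:ℤ) - (r₂:ℤ))*((p:ℤ)^K - 1)
        = 2*((r₁:ℤ) - (r₂:ℤ)) := by ring
    rwa [e] at h
  have hzero : 2*((r₁:ℤ) - (r₂:ℤ)) = 0 := by
    apply Int.eq_zero_of_abs_lt_dvd hdvd2
    rw [abs_lt]
    have h1 : (r₁:ℤ) ≤ d := by exact_mod_cast hr₁
    have h2 : (r₂:ℤ) ≤ d := by exact_mod_cast hr₂
    have h3 : (0:ℤ) ≤ r₁ := by positivity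
    have h4 : (0:ℤ) ≤ r₂ := by positivity
    have h5 : (2*(d:ℤ) + 1) < p := by exact_mod_cast hpd
    omega
  have : (r₁:ℤ) = r₂ := by omega
  exact_mod_cast this
end

section
/- For a prime p and integer k ≥ 0, the condition r_p(x) ∈ [a/p^k, (a+1)/p^k) for a nonnegative integer x and integer 0 ≤ a < p^k is equivalent to x ≡ a' (mod p^k), where a' is the integer obtained by reversing the k base-p digits of a. -/
/-! Since `x < p ^ N` for large `N`, `rdigits p x` is the finite fraction `revDigits p N x / p ^ N`,
and the integer part of `p ^ k * rdigits p x` is read off its leading `k` digits: it is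
`revDigits p k x`. So the interval condition says `revDigits p k x = a`, and as digit reversal is
an involution on residues modulo `p ^ k`, this is `x % p ^ k = revDigits p k a`. -/

/-- `rdigits p x` is the real number in `[0,1)` obtained by reversing the base-`p`
digits of `x` across the radix point. -/
noncomputable def rdigits (p x : ℕ) : ℝ :=
  ∑' j : ℕ, ((x / p^j % p : ℕ) : ℝ) / (p:ℝ)^(j+1)

def revDigits (p k b : ℕ) : ℕ := ∑ j ∈ Finset.range k, b / p^j % p * p^(k-1-j)

theorem revDigits_succ (p k b : ℕ) :
    revDigits p (k + 1) b = p * revDigits p k b + b / p ^ k % p := by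
  rw [revDigits, Finset.sum_range_succ, revDigits, Finset.mul_sum, Nat.add_sub_cancel,
    Nat.sub_self, pow_zero, mul_one]
  congr 1
  refine Finset.sum_congr rfl fun j hj => ?_
  rw [show k - j = (k - 1 - j) + 1 by grind, pow_succ]
  ring

theorem revDigits_lt {p : ℕ} (hp : 0 < p) (k b : ℕ) : revDigits p k b < p ^ k := by
  induction k with
  | zero => simp [revDigits]
  | succ k ih =>
    have hdigit : b / p ^ k % p < p := Nat.mod_lt _ hp
    calc revDigits p (k + 1) b = p * revDigits p k b + b / p ^ k % p := revDigits_succ p k b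
      _ < p * revDigits p k b + p := by omega
      _ = p * (revDigits p k b + 1) := by ring
      _ ≤ p * p ^ k := Nat.mul_le_mul_left p ih
      _ = p ^ (k + 1) := (pow_succ' p k).symm

theorem revDigits_add (p m n b : ℕ) :
    revDigits p (m + n) b = p ^ n * revDigits p m b + revDigits p n (b / p ^ m) := by
  induction n with
  | zero => simp [revDigits]
  | succ n ih =>
    rw [← Nat.add_assoc, revDigits_succ, ih, revDigits_succ, Nat.div_div_eq_div_mul, ← pow_add,
      pow_succ]
    ring

theorem revDigits_add_div {p : ℕ} (hp : 0 < p) (m n b : ℕ) :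
    revDigits p (m + n) b / p ^ n = revDigits p m b := by
  rw [revDigits_add, Nat.mul_add_div (pow_pos hp n), Nat.div_eq_of_lt (revDigits_lt hp n _),
    Nat.add_zero]

theorem revDigits_succ' (p k b : ℕ) :
    revDigits p (k + 1) b = b % p * p ^ k + revDigits p k (b / p) := by
  rw [Nat.add_comm k, revDigits_add]
  simp [revDigits, mul_comm]

theorem revDigits_mod_pow (p k b : ℕ) : revDigits p k (b % p ^ k) = revDigits p k b := by
  refine Finset.sum_congr rfl fun j hj => ?_
  have hj : j < k := Finset.mem_range.mp hj
  have hsplit : p ^ k = p ^ j * p ^ (k - j) := by rw [← pow_add, Nat.add_sub_cancel' hj.le]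
  rw [hsplit, Nat.mod_mul_right_div_self, Nat.mod_mod_of_dvd _ (dvd_pow_self p (by omega))]

theorem revDigits_revDigits {p : ℕ} (hp : 0 < p) (k b : ℕ) :
    revDigits p k (revDigits p k b) = b % p ^ k := by
  induction k generalizing b with
  | zero => simp [revDigits, Nat.mod_one]
  | succ k ih =>
    set r := revDigits p k (b / p)
    have hr : r < p ^ k := revDigits_lt hp k (b / p)
    have hmod : (b % p * p ^ k + r) % p ^ k = r := by
      rw [Nat.mul_add_mod_self_right, Nat.mod_eq_of_lt hr]
    have hdiv : (b % p * p ^ k + r) / p ^ k = b % p := by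
      rw [Nat.add_comm, Nat.add_mul_div_right _ _ (pow_pos hp k), Nat.div_eq_of_lt hr, Nat.zero_add]
    rw [revDigits_succ' p k b, revDigits_succ, ← revDigits_mod_pow p k, hmod, ih, hdiv,
      Nat.mod_mod, pow_succ', Nat.mod_mul]
    ring

theorem revDigits_eq_iff {p k a : ℕ} (hp : 0 < p) (ha : a < p ^ k) (b : ℕ) :
    revDigits p k b = a ↔ b % p ^ k = revDigits p k a := by
  constructor
  · rintro rfl
    rw [revDigits_revDigits hp]
  · intro hb
    rw [← revDigits_mod_pow, hb, revDigits_revDigits hp, Nat.mod_eq_of_lt ha]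

theorem rdigits_nonneg (p x : ℕ) : 0 ≤ rdigits p x :=
  tsum_nonneg fun _ => by positivity

theorem rdigits_eq_revDigits_div {p N x : ℕ} (hp : 0 < p) (hx : x < p ^ N) :
    rdigits p x = revDigits p N x / (p : ℝ) ^ N := by
  have htail : ∀ j ∉ Finset.range N, ((x / p ^ j % p : ℕ) : ℝ) / (p : ℝ) ^ (j + 1) = 0 := by
    intro j hj
    have hxj : x < p ^ j := hx.trans_le (Nat.pow_le_pow_right hp (by simpa using hj))
    simp [Nat.div_eq_of_lt hxj]
  rw [rdigits, tsum_eq_sum htail, revDigits, Nat.cast_sum, Finset.sum_div]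
  refine Finset.sum_congr rfl fun j hj => ?_
  have hsplit : (p : ℝ) ^ N = (p : ℝ) ^ (N - 1 - j) * (p : ℝ) ^ (j + 1) := by
    rw [← pow_add]; congr 1; grind
  rw [hsplit]
  field_simp
  push_cast
  ring

theorem mem_Ico_div_iff_floor_mul_eq {y c : ℝ} (hy : 0 ≤ y) (hc : 0 < c) (a : ℕ) :
    y ∈ Set.Ico (a / c) ((a + 1) / c) ↔ ⌊y * c⌋₊ = a := by
  rw [Nat.floor_eq_iff (by positivity), Set.mem_Ico, div_le_iff₀ hc, lt_div_iff₀ hc]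

theorem floor_rdigits_mul_pow {p : ℕ} (hp : 1 < p) (k x : ℕ) :
    ⌊rdigits p x * (p : ℝ) ^ k⌋₊ = revDigits p k x := by
  have hx : x < p ^ (k + x) :=
    (Nat.lt_pow_self hp).trans_le (Nat.pow_le_pow_right (by omega) (by omega))
  have hpk : (p : ℝ) ^ k ≠ 0 := by positivity
  rw [rdigits_eq_revDigits_div (by omega) hx, pow_add, mul_comm ((p : ℝ) ^ k), ← div_div,
    div_mul_cancel₀ _ hpk, ← Nat.cast_pow, Nat.floor_div_eq_div, revDigits_add_div (by omega)]

/-- `r_p(x) ∈ [a/p^k, (a+1)/p^k)` iff `x ≡ a' (mod p^k)`, where `a'` is the reversal of the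
`k` base-`p` digits of `a`. -/
theorem stmt_14 (p : ℕ) (hp : p.Prime) (k a : ℕ) (ha : a < p^k)
    (a' : ℕ) (ha' : a' = ∑ j ∈ Finset.range k, a / p^j % p * p^(k-1-j))
    (x : ℕ) :
    rdigits p x ∈ Set.Ico ((a:ℝ)/(p:ℝ)^k) (((a:ℝ)+1)/(p:ℝ)^k) ↔ x % p^k = a' := by
  rw [mem_Ico_div_iff_floor_mul_eq (rdigits_nonneg p x) (by positivity [hp.pos]),
    floor_rdigits_mul_pow hp.one_lt, revDigits_eq_iff hp.pos ha, ha', revDigits]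
end

section
/- Let (a,b) be a toroidal interval in [0,1) and define f_{(a,b)}(x) = log(max{len(a,x), len(x,b)} / len(a,b)) for x ∈ (a,b) and f_{(a,b)}(x) = 0 otherwise, where len denotes toroidal length. Then ∫_0^1 f_{(a,b)}(x) dx = (log 2 − 1)·len(a,b). -/
open scoped Classical

/-- Toroidal length of the toroidal interval `(a,b)` on `ℝ/ℤ` (for `a,b ∈ [0,1)`). -/
noncomputable def tlen (a b : ℝ) : ℝ := if a ≤ b then b - a else b - a + 1

/-- Membership of `x` in the toroidal interval `(a,b)`:
the usual interval if `a < b`, and `(a,1] ∪ [0,b)` if `a > b`. -/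
def tmem (x a b : ℝ) : Prop := if a < b then a < x ∧ x < b else a < x ∨ x < b

/-!
Cut the circle at `a` and unroll `(a,b)` to the usual interval `(a, c)`, `c = a + len(a,b) ≤ 2`.
On `(0,1)` the integrand is `G x + G (x + 1)`, where `G` is
`x ↦ log (max (x - a) (c - x) / (c - a))` restricted to `(a, c)`, so its integral over `[0,1]`
is the integral of that function over `(a, c)`. Rescaling `(a, c)` to `(0, 1)` leaves
`(c - a) ∫₀¹ log (max t (1 - t)) dt`, and by the symmetry `t ↦ 1 - t` this last integral is
`2 ∫_{1/2}^1 log t dt = log 2 - 1`.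
-/

open Set Real MeasureTheory

lemma continuous_log_max_self_one_sub : Continuous fun t : ℝ => log (max t (1 - t)) := by
  refine (continuous_id.max (continuous_sub_left 1)).log fun t => (?_ : 0 < max t (1 - t)).ne'
  rcases le_total t (1 / 2) with ht | ht
  · exact lt_max_of_lt_right (by linarith)
  · exact lt_max_of_lt_left (by linarith)

lemma integral_log_max_self_one_sub : ∫ t in (0 : ℝ)..1, log (max t (1 - t)) = log 2 - 1 := by
  have hc := continuous_log_max_self_one_sub
  have hleft :
      ∫ t in (0 : ℝ)..1 / 2, log (max t (1 - t)) = ∫ t in (1 / 2 : ℝ)..1, log t := by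
    rw [intervalIntegral.integral_congr (g := fun t => log (1 - t)),
      intervalIntegral.integral_comp_sub_left (fun t => log t)]
    · norm_num
    · intro t ht
      rw [uIcc_of_le (by norm_num)] at ht
      simp only [max_eq_right (by linarith [ht.2] : t ≤ 1 - t)]
  have hright :
      ∫ t in (1 / 2 : ℝ)..1, log (max t (1 - t)) = ∫ t in (1 / 2 : ℝ)..1, log t := by
    refine intervalIntegral.integral_congr fun t ht => ?_
    rw [uIcc_of_le (by norm_num)] at ht
    simp only [max_eq_left (by linarith [ht.1] : 1 - t ≤ t)]
  rw [← intervalIntegral.integral_add_adjacent_intervals (b := 1 / 2)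
    (hc.intervalIntegrable _ _) (hc.intervalIntegrable _ _), hleft, hright, integral_log,
    one_div, log_inv, log_one]
  ring

noncomputable def logRelGap (a c x : ℝ) : ℝ := log (max (x - a) (c - x) / (c - a))

lemma continuous_logRelGap {a c : ℝ} (h : a ≤ c) : Continuous (logRelGap a c) := by
  rcases h.eq_or_lt with rfl | h
  · have : logRelGap a a = fun _ => 0 := funext fun x => by simp [logRelGap]
    exact this ▸ continuous_const
  refine (((continuous_sub_right a).max (continuous_sub_left c)).div_const _).log fun x => ?_
  refine (div_pos ?_ (sub_pos.mpr h)).ne'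
  rcases le_total x ((a + c) / 2) with hx | hx
  · exact lt_max_of_lt_right (by linarith)
  · exact lt_max_of_lt_left (by linarith)

lemma logRelGap_mul_add {a c : ℝ} (h : a < c) (t : ℝ) :
    logRelGap a c ((c - a) * t + a) = log (max t (1 - t)) := by
  have hL : 0 < c - a := sub_pos.mpr h
  rw [logRelGap, show c - ((c - a) * t + a) = (c - a) * (1 - t) by ring, add_sub_cancel_right,
    ← mul_max_of_nonneg _ _ hL.le, mul_div_cancel_left₀ _ hL.ne']

lemma integral_logRelGap {a c : ℝ} (h : a ≤ c) :
    ∫ x in a..c, logRelGap a c x = (log 2 - 1) * (c - a) := by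
  rcases h.eq_or_lt with rfl | h
  · simp
  have := intervalIntegral.smul_integral_comp_mul_add (logRelGap a c) (c - a) a (a := 0) (b := 1)
  simp only [logRelGap_mul_add h, mul_zero, zero_add, mul_one, sub_add_cancel, smul_eq_mul,
    integral_log_max_self_one_sub] at this
  rw [← this, mul_comm]

lemma intervalIntegral.integral_indicator_Ioo {f : ℝ → ℝ} {u a c v : ℝ} (hua : u ≤ a)
    (hac : a ≤ c) (hcv : c ≤ v) :
    ∫ x in u..v, (Ioo a c).indicator f x = ∫ x in a..c, f x := by
  rw [intervalIntegral.integral_of_le (hua.trans (hac.trans hcv)),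
    MeasureTheory.integral_indicator measurableSet_Ioo,
    Measure.restrict_restrict measurableSet_Ioo,
    inter_eq_left.mpr (Ioo_subset_Ioc_self.trans (Ioc_subset_Ioc hua hcv)),
    intervalIntegral.integral_of_le hac, integral_Ioc_eq_integral_Ioo]

lemma add_tlen_mem_Icc {a b : ℝ} (ha : a ∈ Ico 0 1) (hb : b ∈ Ico 0 1) :
    a + tlen a b ∈ Icc a 2 := by
  obtain ⟨ha0, ha1⟩ := ha
  obtain ⟨hb0, hb1⟩ := hb
  unfold tlen
  split_ifs <;> constructor <;> linarith

lemma ite_tmem_eq_indicator_add_indicator {a b x : ℝ} (ha : a ∈ Ico 0 1) (hb : b ∈ Ico 0 1)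
    (hx : x ∈ Ioo 0 1) :
    (if tmem x a b then log (max (tlen a x) (tlen x b) / tlen a b) else 0) =
      (Ioo a (a + tlen a b)).indicator (logRelGap a (a + tlen a b)) x +
        (Ioo a (a + tlen a b)).indicator (logRelGap a (a + tlen a b)) (x + 1) := by
  obtain ⟨ha0, ha1⟩ := ha
  obtain ⟨hb0, hb1⟩ := hb
  obtain ⟨hx0, hx1⟩ := hx
  unfold tmem tlen
  split_ifs <;> simp only [indicator, mem_Ioo, logRelGap] <;> split_ifs <;> grind [log_zero]

theorem stmt_18_general (a b : ℝ) (ha : a ∈ Set.Ico (0:ℝ) 1) (hb : b ∈ Set.Ico (0:ℝ) 1) :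
    (∫ x in (0:ℝ)..1,
        (if tmem x a b then Real.log (max (tlen a x) (tlen x b) / tlen a b) else 0))
      = (Real.log 2 - 1) * tlen a b := by
  obtain ⟨hac, hc2⟩ := add_tlen_mem_Icc ha hb
  set c := a + tlen a b
  set G := (Ioo a c).indicator (logRelGap a c)
  have hG (u v : ℝ) : IntervalIntegrable G volume u v := by
    rw [intervalIntegrable_iff]
    exact ((continuous_logRelGap hac).intervalIntegrable u v).def'.indicator measurableSet_Ioo
  calc _ = ∫ x in (0 : ℝ)..1, (G x + G (x + 1)) :=
        intervalIntegral.integral_congr_Ioo_of_le zero_le_one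
          fun x hx => ite_tmem_eq_indicator_add_indicator ha hb hx
    _ = (∫ x in (0 : ℝ)..1, G x) + ∫ x in (1 : ℝ)..2, G x := by
        have hG' : IntervalIntegrable (fun x => G (x + 1)) volume 0 1 := by
          simpa using (hG 1 (1 + 1)).comp_add_right 1
        rw [intervalIntegral.integral_add (hG 0 1) hG', intervalIntegral.integral_comp_add_right]
        norm_num
    _ = ∫ x in a..c, logRelGap a c x := by
        rw [intervalIntegral.integral_add_adjacent_intervals (hG 0 1) (hG 1 2),
          intervalIntegral.integral_indicator_Ioo ha.1 hac hc2]
    _ = (log 2 - 1) * tlen a b := by rw [integral_logRelGap hac, add_sub_cancel_left]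

/-- `∫_0^1 f_{(a,b)}(x) dx = (log 2 − 1)·len(a,b)` where
`f_{(a,b)}(x) = log(max{len(a,x), len(x,b)}/len(a,b))` on `(a,b)` and `0` elsewhere. -/
theorem stmt_18 (a b : ℝ) (ha : a ∈ Set.Ico (0:ℝ) 1) (hb : b ∈ Set.Ico (0:ℝ) 1)
    (hab : a ≠ b) :
    (∫ x in (0:ℝ)..1,
        (if tmem x a b then Real.log (max (tlen a x) (tlen x b) / tlen a b) else 0))
      = (Real.log 2 - 1) * tlen a b :=
  stmt_18_general a b ha hb
end
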